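/- Let C > 0 and let g, h : ℝ → ℂ be continuous functions satisfying |g(x)| ≤ C·e^{−eˣ}·e^{−x/2} and |h(x)| ≤ C·e^{eˣ}·e^{−x/2} for all x ∈ ℝ. Define f₀ = g, f_{n+1}(x) = ∫ₓ^∞ (h(x)g(y) − g(x)h(y))·e^{−2y}·f_n(y) dy, and S(x) = ∑_{n=0}^∞ f_n(x). Then for every x ∈ ℝ the function y ↦ (h(x)g(y) − g(x)h(y))·e^{−2y}·S(y) is absolutely integrable on [x,∞) and S satisfies the integral equation S(x) = g(x) + ∫ₓ^∞ (h(x)g(y) − g(x)h(y))·e^{−2y}·S(y) dy. -/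

import Mathlib

/-!
Induction on `n` gives `‖fₙ(x)‖ ≤ C (2C²/3)ⁿ/n! · e^{-eˣ} e^{-(6n+1)x/2}`. The key estimate is
that for `x ≤ y` the kernel `K(x,y) = (h(x)g(y) − g(x)h(y)) e^{-2y}` satisfies
`|K(x,y)| e^{-e^y} e^{-y/2} ≤ 2C² e^{-eˣ} e^{-x/2} e^{-3y}`: the growth `e^{eˣ}` of `h(x)` is
beaten by `e^{-2e^y}`. Integrating `e^{-3(n+1)y}` over `(x, ∞)` produces the factor
`1/(3(n+1))`, hence the factorial. The same estimate bounds `∫ₓ^∞ |K(x,y) fₙ(y)| dy` by the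
bound for `f_{n+1}(x)`, so these integrals are summable and the series can be integrated term
by term; `S = f₀ + ∑ f_{n+1}` is then the integral equation. Measurability of the `fₙ` comes from
their continuity, which follows by splitting
`f_{n+1}(x) = h(x) ∫ₓ^∞ g e^{-2y} fₙ − g(x) ∫ₓ^∞ h e^{-2y} fₙ` into tail integrals.
-/

open Real MeasureTheory Set Filter Topology

namespace MeasureTheory

variable {α E : Type*} [MeasurableSpace α] {μ : Measure α} [NormedAddCommGroup E]
  [CompleteSpace E]

theorem integrable_tsum_of_summable_integral_norm {ι : Type*} [Countable ι] {F : ι → α → E}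
    (hF_int : ∀ i, Integrable (F i) μ) (hF_sum : Summable fun i ↦ ∫ a, ‖F i a‖ ∂μ) :
    Integrable (fun a ↦ ∑' i, F i a) μ := by
  have hmeas : AEMeasurable (fun a ↦ ∑' i, ‖F i a‖ₑ) μ :=
    AEMeasurable.tsum fun i ↦ (hF_int i).1.enorm
  have hfin : ∫⁻ a, ∑' i, ‖F i a‖ₑ ∂μ < ⊤ := by
    rw [lintegral_tsum fun i ↦ (hF_int i).1.enorm]
    simp_rw [← ofReal_integral_norm_eq_lintegral_enorm (hF_int _)]
    rw [← ENNReal.ofReal_tsum_of_nonneg (fun i ↦ integral_nonneg fun a ↦ norm_nonneg _) hF_sum]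
    exact ENNReal.ofReal_lt_top
  have hsum : ∀ᵐ a ∂μ, Summable fun i ↦ F i a := by
    filter_upwards [ae_lt_top' hmeas hfin.ne] with a ha
    exact (NNReal.summable_coe.2 (ENNReal.tsum_coe_ne_top_iff_summable.1 ha.ne)).of_norm
  refine ⟨aestronglyMeasurable_of_tendsto_ae atTop
    (fun s ↦ Finset.aestronglyMeasurable_fun_sum s fun i _ ↦ (hF_int i).1)
    (hsum.mono fun a ha ↦ ha.hasSum), ?_⟩
  exact (lintegral_mono fun a ↦ enorm_tsum_le_tsum_enorm).trans_lt hfin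

theorem continuous_primitive_Ioi {F : Type*} [NormedAddCommGroup F] [NormedSpace ℝ F]
    {f : ℝ → F} (hf : ∀ a, IntegrableOn f (Ioi a)) : Continuous fun b ↦ ∫ x in Ioi b, f x :=
  continuous_iff_continuousAt.2 fun b ↦
    (hf (b - 1)).continuousOn_Ici_primitive_Ioi.continuousAt (Ici_mem_nhds (by linarith))

end MeasureTheory

namespace Volterra

open Nat in
noncomputable def approxCoeff (C : ℝ) (n : ℕ) : ℝ := C * (2 * C ^ 2 / 3) ^ n / n !

noncomputable def decay (x : ℝ) : ℝ := exp (-exp x) * exp (-x / 2)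

noncomputable def approxBound (C : ℝ) (n : ℕ) (x : ℝ) : ℝ :=
  approxCoeff C n * exp (-(3 * n) * x) * decay x

noncomputable def kernel (g h : ℝ → ℂ) (x y : ℝ) : ℂ := (h x * g y - g x * h y) * exp (-2 * y)

lemma decay_pos (x : ℝ) : 0 < decay x := by unfold decay; positivity

lemma approxCoeff_nonneg {C : ℝ} (hC : 0 ≤ C) (n : ℕ) : 0 ≤ approxCoeff C n := by
  unfold approxCoeff; positivity

lemma approxBound_zero (C x : ℝ) : approxBound C 0 x = C * decay x := by
  simp [approxBound, approxCoeff]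

lemma approxBound_succ (C : ℝ) (n : ℕ) (x : ℝ) :
    approxBound C (n + 1) x =
      2 * C ^ 2 * approxCoeff C n / (3 * n + 3) * exp (-(3 * n + 3) * x) * decay x := by
  simp only [approxBound, approxCoeff, pow_succ, Nat.factorial_succ]
  push_cast
  field_simp

lemma summable_approxBound (C x : ℝ) : Summable fun n ↦ approxBound C n x := by
  refine ((Real.summable_pow_div_factorial (2 * C ^ 2 / 3 * exp (-(3 * x)))).mul_left C
    |>.mul_right (decay x)).congr fun n ↦ ?_
  rw [approxBound, approxCoeff, show -(3 * (n : ℝ)) * x = n * -(3 * x) by ring, exp_nat_mul,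
    mul_pow]
  ring

section Kernel

variable {C c b : ℝ} {g h u : ℝ → ℂ}

lemma nonneg_of_norm_le_decay (hg : ∀ x, ‖g x‖ ≤ C * decay x) : 0 ≤ C :=
  nonneg_of_mul_nonneg_left ((norm_nonneg _).trans (hg 0)) (decay_pos 0)

lemma norm_le_of_le_decay (hg : ∀ x, ‖g x‖ ≤ C * decay x) (x : ℝ) :
    ‖g x‖ ≤ C * exp (exp x) * exp (-x / 2) := by
  have hC := nonneg_of_norm_le_decay hg
  refine (hg x).trans ?_
  rw [decay, ← mul_assoc]
  gcongr
  linarith [exp_pos x]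

lemma norm_kernel_mul_decay_le (hg : ∀ x, ‖g x‖ ≤ C * decay x)
    (hh : ∀ x, ‖h x‖ ≤ C * exp (exp x) * exp (-x / 2)) {x y : ℝ} (hxy : x ≤ y) :
    ‖kernel g h x y‖ * decay y ≤ 2 * C ^ 2 * decay x * exp (-3 * y) := by
  have hgx : 0 ≤ C * decay x := (norm_nonneg _).trans (hg x)
  have hhx : 0 ≤ C * exp (exp x) * exp (-x / 2) := (norm_nonneg _).trans (hh x)
  have hexp : exp x ≤ exp y := exp_le_exp.2 hxy
  have hnorm : ‖kernel g h x y‖ ≤ (‖h x‖ * ‖g y‖ + ‖g x‖ * ‖h y‖) * exp (-2 * y) := by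
    rw [kernel, norm_mul, Complex.norm_real, norm_of_nonneg (exp_pos _).le, ← norm_mul,
      ← norm_mul]
    gcongr
    exact norm_sub_le _ _
  calc ‖kernel g h x y‖ * decay y
      ≤ (C * exp (exp x) * exp (-x / 2) * (C * decay y)
          + C * decay x * (C * exp (exp y) * exp (-y / 2))) * exp (-2 * y) * decay y := by
        refine mul_le_mul_of_nonneg_right (hnorm.trans ?_) (decay_pos y).le
        gcongr
        exacts [hh x, hg y, hg x, hh y]
    _ = C ^ 2 * (exp (exp x + -exp y + -exp y + (-x / 2 + -y / 2 + -2 * y + -y / 2))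
          + exp (-exp x + exp y + -exp y + (-x / 2 + -y / 2 + -2 * y + -y / 2))) := by
        simp only [exp_add, decay]
        ring
    _ ≤ C ^ 2 * (exp (-exp x + (-x / 2 + -y / 2 + -2 * y + -y / 2))
          + exp (-exp x + (-x / 2 + -y / 2 + -2 * y + -y / 2))) := by
        gcongr <;> linarith
    _ = 2 * C ^ 2 * decay x * exp (-3 * y) := by
        rw [show -3 * y = -y / 2 + -2 * y + -y / 2 by ring]
        simp only [exp_add, decay]
        ring

lemma integrableOn_mul_exp_mul {v : ℝ → ℂ} (hv_meas : Measurable v)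
    (hv : ∀ y, ‖v y‖ ≤ C * exp (exp y) * exp (-y / 2)) (hu_meas : Measurable u)
    (hu : ∀ y, ‖u y‖ ≤ c * exp (-b * y) * decay y) (hb : -3 < b) (a : ℝ) :
    IntegrableOn (fun y ↦ v y * exp (-2 * y) * u y) (Ioi a) := by
  refine ((exp_neg_integrableOn_Ioi a (by linarith : 0 < b + 3)).const_mul (C * c)).mono'
    (by fun_prop) (ae_of_all _ fun y ↦ ?_)
  calc ‖v y * exp (-2 * y) * u y‖ = ‖v y‖ * exp (-2 * y) * ‖u y‖ := by
        rw [norm_mul, norm_mul, Complex.norm_real, norm_of_nonneg (exp_pos _).le]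
    _ ≤ C * exp (exp y) * exp (-y / 2) * exp (-2 * y) * (c * exp (-b * y) * decay y) := by
        have hv0 : 0 ≤ C * exp (exp y) * exp (-y / 2) := (norm_nonneg _).trans (hv y)
        gcongr
        exacts [hv y, hu y]
    _ = C * c * exp (-(b + 3) * y) := by
        rw [decay, show -(b + 3) * y = -y / 2 + -2 * y + -b * y + -y / 2 by ring]
        simp only [exp_add, exp_neg]
        field_simp

lemma kernel_mul_eq (x y : ℝ) (w : ℂ) :
    kernel g h x y * w = h x * (g y * exp (-2 * y) * w) - g x * (h y * exp (-2 * y) * w) := by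
  unfold kernel; ring

lemma integrableOn_kernel_mul (hg_meas : Measurable g) (hh_meas : Measurable h)
    (hg : ∀ x, ‖g x‖ ≤ C * decay x) (hh : ∀ x, ‖h x‖ ≤ C * exp (exp x) * exp (-x / 2))
    (hu_meas : Measurable u) (hu : ∀ y, ‖u y‖ ≤ c * exp (-b * y) * decay y) (hb : -3 < b)
    (x a : ℝ) : IntegrableOn (fun y ↦ kernel g h x y * u y) (Ioi a) := by
  simp_rw [kernel_mul_eq]
  exact ((integrableOn_mul_exp_mul hg_meas (norm_le_of_le_decay hg) hu_meas hu hb a).const_mul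
    (h x)).sub ((integrableOn_mul_exp_mul hh_meas hh hu_meas hu hb a).const_mul (g x))

lemma continuous_integral_kernel_mul (hg_cont : Continuous g) (hh_cont : Continuous h)
    (hg : ∀ x, ‖g x‖ ≤ C * decay x) (hh : ∀ x, ‖h x‖ ≤ C * exp (exp x) * exp (-x / 2))
    (hu_meas : Measurable u) (hu : ∀ y, ‖u y‖ ≤ c * exp (-b * y) * decay y) (hb : -3 < b) :
    Continuous fun x ↦ ∫ y in Ioi x, kernel g h x y * u y := by
  have hgu := integrableOn_mul_exp_mul hg_cont.measurable (norm_le_of_le_decay hg) hu_meas hu hb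
  have hhu := integrableOn_mul_exp_mul hh_cont.measurable hh hu_meas hu hb
  have hsplit : (fun x ↦ ∫ y in Ioi x, kernel g h x y * u y) = fun x ↦
      h x * (∫ y in Ioi x, g y * exp (-2 * y) * u y)
        - g x * ∫ y in Ioi x, h y * exp (-2 * y) * u y := by
    funext x
    simp_rw [kernel_mul_eq]
    rw [integral_sub ((hgu x).const_mul _) ((hhu x).const_mul _), integral_const_mul,
      integral_const_mul]
  rw [hsplit]
  exact (hh_cont.mul (continuous_primitive_Ioi hgu)).sub
    (hg_cont.mul (continuous_primitive_Ioi hhu))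

lemma integral_norm_kernel_mul_le (hg : ∀ x, ‖g x‖ ≤ C * decay x)
    (hh : ∀ x, ‖h x‖ ≤ C * exp (exp x) * exp (-x / 2)) {x : ℝ}
    (hint : IntegrableOn (fun y ↦ kernel g h x y * u y) (Ioi x))
    (hu : ∀ y, ‖u y‖ ≤ c * exp (-b * y) * decay y) (hc : 0 ≤ c) (hb : -3 < b) :
    ∫ y in Ioi x, ‖kernel g h x y * u y‖
      ≤ 2 * C ^ 2 * c / (b + 3) * exp (-(b + 3) * x) * decay x := by
  have hb3 : 0 < b + 3 := by linarith
  calc ∫ y in Ioi x, ‖kernel g h x y * u y‖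
      ≤ ∫ y in Ioi x, 2 * C ^ 2 * c * decay x * exp (-(b + 3) * y) := by
        refine setIntegral_mono_on hint.norm ((exp_neg_integrableOn_Ioi x hb3).const_mul _)
          measurableSet_Ioi fun y hy ↦ ?_
        calc ‖kernel g h x y * u y‖ ≤ ‖kernel g h x y‖ * (c * exp (-b * y) * decay y) := by
              rw [norm_mul]; gcongr; exact hu y
          _ = c * exp (-b * y) * (‖kernel g h x y‖ * decay y) := by ring
          _ ≤ c * exp (-b * y) * (2 * C ^ 2 * decay x * exp (-3 * y)) :=
              mul_le_mul_of_nonneg_left (norm_kernel_mul_decay_le hg hh (le_of_lt hy))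
                (by positivity)
          _ = 2 * C ^ 2 * c * decay x * exp (-(b + 3) * y) := by
              rw [show -(b + 3) * y = -b * y + -3 * y by ring, exp_add]; ring
    _ = 2 * C ^ 2 * c / (b + 3) * exp (-(b + 3) * x) * decay x := by
        rw [integral_const_mul, integral_exp_mul_Ioi (by linarith) x]
        field_simp

end Kernel

section SuccessiveApprox

variable {C : ℝ} {g h u : ℝ → ℂ}

lemma integral_norm_kernel_mul_le_approxBound (hg : ∀ x, ‖g x‖ ≤ C * decay x)
    (hh : ∀ x, ‖h x‖ ≤ C * exp (exp x) * exp (-x / 2)) {n : ℕ} {x : ℝ}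
    (hint : IntegrableOn (fun y ↦ kernel g h x y * u y) (Ioi x))
    (hu : ∀ y, ‖u y‖ ≤ approxBound C n y) :
    ∫ y in Ioi x, ‖kernel g h x y * u y‖ ≤ approxBound C (n + 1) x := by
  rw [approxBound_succ]
  exact integral_norm_kernel_mul_le hg hh hint hu
    (approxCoeff_nonneg (nonneg_of_norm_le_decay hg) n) (by linarith [n.cast_nonneg (α := ℝ)])

theorem continuous_and_norm_le_approxBound (hg_cont : Continuous g) (hh_cont : Continuous h)
    (hg : ∀ x, ‖g x‖ ≤ C * decay x) (hh : ∀ x, ‖h x‖ ≤ C * exp (exp x) * exp (-x / 2))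
    {f : ℕ → ℝ → ℂ} (hf0 : f 0 = g)
    (hf : ∀ n x, f (n + 1) x = ∫ y in Ioi x, kernel g h x y * f n y) (n : ℕ) :
    Continuous (f n) ∧ ∀ x, ‖f n x‖ ≤ approxBound C n x := by
  induction n with
  | zero => exact ⟨hf0 ▸ hg_cont, fun x ↦ by rw [hf0, approxBound_zero]; exact hg x⟩
  | succ n ih =>
    obtain ⟨hcont, hbound⟩ := ih
    have hb : -3 < 3 * (n : ℝ) := by linarith [n.cast_nonneg (α := ℝ)]
    rw [funext (hf n)]
    refine ⟨continuous_integral_kernel_mul hg_cont hh_cont hg hh hcont.measurable hbound hb,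
      fun x ↦ ?_⟩
    exact (norm_integral_le_integral_norm _).trans <| integral_norm_kernel_mul_le_approxBound hg hh
      (integrableOn_kernel_mul hg_cont.measurable hh_cont.measurable hg hh hcont.measurable
        hbound hb x x) hbound

end SuccessiveApprox

end Volterra

open Volterra

theorem stmt_14_general (C : ℝ) (g h : ℝ → ℂ)
    (hg_cont : Continuous g) (hh_cont : Continuous h)
    (hg : ∀ x : ℝ, ‖g x‖ ≤ C * Real.exp (-Real.exp x) * Real.exp (-x / 2))
    (hh : ∀ x : ℝ, ‖h x‖ ≤ C * Real.exp (Real.exp x) * Real.exp (-x / 2))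
    (f : ℕ → ℝ → ℂ) (hf0 : f 0 = g)
    (hf : ∀ n : ℕ, ∀ x : ℝ,
      f (n + 1) x =
        ∫ y in Set.Ioi x, (h x * g y - g x * h y) * Real.exp (-2 * y) * f n y)
    (S : ℝ → ℂ) (hS : S = fun x => ∑' n : ℕ, f n x) :
    ∀ x : ℝ,
      IntegrableOn (fun y => (h x * g y - g x * h y) * Real.exp (-2 * y) * S y)
        (Set.Ioi x) ∧
      S x = g x +
        ∫ y in Set.Ioi x, (h x * g y - g x * h y) * Real.exp (-2 * y) * S y := by
  have hg' : ∀ x, ‖g x‖ ≤ C * decay x := fun x ↦ (hg x).trans_eq (mul_assoc _ _ _)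
  obtain ⟨hcont, hbound⟩ :=
    forall_and.1 (continuous_and_norm_le_approxBound hg_cont hh_cont hg' hh hf0 hf)
  intro x
  have hint n : IntegrableOn (fun y ↦ kernel g h x y * f n y) (Ioi x) :=
    integrableOn_kernel_mul hg_cont.measurable hh_cont.measurable hg' hh (hcont n).measurable
      (hbound n) (by linarith [n.cast_nonneg (α := ℝ)]) x x
  have hsum : Summable fun n ↦ ∫ y in Ioi x, ‖kernel g h x y * f n y‖ :=
    ((summable_nat_add_iff 1).2 (summable_approxBound C x)).of_nonneg_of_le
      (fun n ↦ integral_nonneg fun _ ↦ norm_nonneg _)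
      (fun n ↦ integral_norm_kernel_mul_le_approxBound hg' hh (hint n) (hbound n))
  have hKS : (fun y ↦ kernel g h x y * S y) = fun y ↦ ∑' n, kernel g h x y * f n y := by
    simp_rw [hS, tsum_mul_left]
  refine ⟨hKS ▸ integrable_tsum_of_summable_integral_norm hint hsum, ?_⟩
  have hfx : Summable fun n ↦ f n x :=
    Summable.of_norm_bounded (summable_approxBound C x) fun n ↦ hbound n x
  change S x = g x + ∫ y in Ioi x, kernel g h x y * S y
  rw [hKS, ← integral_tsum_of_summable_integral_norm hint hsum, congrFun hS x,
    hfx.tsum_eq_zero_add, hf0]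
  exact congrArg _ (tsum_congr fun n ↦ hf n x)

/-- The sum `S` of the successive approximations solves the Volterra integral
equation `S(x) = g(x) + ∫ₓ^∞ (h(x)g(y) − g(x)h(y)) e^{−2y} S(y) dy`. -/
theorem stmt_14 (C : ℝ) (hC : 0 < C) (g h : ℝ → ℂ)
    (hg_cont : Continuous g) (hh_cont : Continuous h)
    (hg : ∀ x : ℝ, ‖g x‖ ≤ C * Real.exp (-Real.exp x) * Real.exp (-x / 2))
    (hh : ∀ x : ℝ, ‖h x‖ ≤ C * Real.exp (Real.exp x) * Real.exp (-x / 2))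
    (f : ℕ → ℝ → ℂ) (hf0 : f 0 = g)
    (hf : ∀ n : ℕ, ∀ x : ℝ,
      f (n + 1) x =
        ∫ y in Set.Ioi x, (h x * g y - g x * h y) * Real.exp (-2 * y) * f n y)
    (S : ℝ → ℂ) (hS : S = fun x => ∑' n : ℕ, f n x) :
    ∀ x : ℝ,
      IntegrableOn (fun y => (h x * g y - g x * h y) * Real.exp (-2 * y) * S y)
        (Set.Ioi x) ∧
      S x = g x +
        ∫ y in Set.Ioi x, (h x * g y - g x * h y) * Real.exp (-2 * y) * S y :=
  stmt_14_general C g h hg_cont hh_cont hg hh f hf0 hf S hS
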